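/- Let k ≥ 3 be an integer and let (n_1, …, n_k) be positive integers with n_1 ≥ n_2 ≥ … ≥ n_k, and set p = n_1 + … + n_k. If n_1 ≤ p/2, then 4 − 2(p − n_1) + Σ_{i=1}^{k} n_i(p − n_i) ≥ p²/2; equivalently, 2(4 − 2(p − n_1) + Σ_{i=1}^{k} n_i(p − n_i)) ≥ p². -/

import Mathlib

/-!
Write `a = n₀`, `b = n₁`, and let `c` and `q` be the sum and the sum of squares of the remaining
parts. Since `Σᵢ nᵢ (p - nᵢ) = p² - Σᵢ nᵢ²`, the claim only involves `a`, `b`, `c`, `q`. Every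
remaining part lies in `[1, b]`, where `x² ≤ (b + 1) x - b`, so `q ≤ (b + 1) c - b`. What is left
is a quadratic inequality in `a`, `b`, `c`, which holds as a sum of nonnegative products under
`1 ≤ b ≤ a ≤ b + c` and `1 ≤ c`.
-/

open Finset

theorem Finset.sum_mul_sum_sub_self {ι R : Type*} [CommRing R] (s : Finset ι) (x : ι → R) :
    ∑ i ∈ s, x i * (∑ j ∈ s, x j - x i) = (∑ i ∈ s, x i) ^ 2 - ∑ i ∈ s, x i ^ 2 := by
  simp only [mul_sub, sum_sub_distrib, ← sum_mul, sq]

section OrderedRing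

variable {R : Type*} [CommRing R] [LinearOrder R] [IsStrictOrderedRing R]

theorem Finset.sum_sq_le_of_one_le_of_le {ι : Type*} (s : Finset ι) (x : ι → R) (M : R)
    (h₁ : ∀ i ∈ s, 1 ≤ x i) (hM : ∀ i ∈ s, x i ≤ M) :
    ∑ i ∈ s, x i ^ 2 ≤ (M + 1) * ∑ i ∈ s, x i - #s * M := by
  calc ∑ i ∈ s, x i ^ 2 ≤ ∑ i ∈ s, ((M + 1) * x i - M) :=
        sum_le_sum fun i hi => by
          nlinarith [mul_nonneg (sub_nonneg.2 (h₁ i hi)) (sub_nonneg.2 (hM i hi))]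
    _ = (M + 1) * ∑ i ∈ s, x i - #s * M := by
        rw [sum_sub_distrib, ← mul_sum, sum_const, nsmul_eq_mul]

theorem sq_add_add_le_two_mul_edge_bound {a b c q : R} (hb : 1 ≤ b) (hab : b ≤ a)
    (ha : a ≤ b + c) (hc : 1 ≤ c) (hq : q ≤ (b + 1) * c - b) :
    (a + b + c) ^ 2 ≤ 2 * (4 - 2 * (b + c) + ((a + b + c) ^ 2 - (a ^ 2 + b ^ 2 + q))) := by
  linear_combination sq_nonneg (c - 2) + mul_nonneg (sub_nonneg.2 hab) (zero_le_one.trans hc)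
    + 2 * mul_nonneg (sub_nonneg.2 hb) (sub_nonneg.2 hc)
    + mul_nonneg (sub_nonneg.2 hab) (sub_nonneg.2 ha) + 2 * hq

end OrderedRing

theorem Fin.sum_univ_eq_zero_add_one_add {M : Type*} [AddCommMonoid M] {m : ℕ}
    (f : Fin (m + 3) → M) : ∑ i, f i = f 0 + f 1 + ∑ i : Fin (m + 1), f i.succ.succ := by
  rw [Fin.sum_univ_succ, Fin.sum_univ_succ, Fin.succ_zero_eq_one]
  exact (add_assoc _ _ _).symm

/-- arithmetic step in Theorem 23: Let `k ≥ 3` and `(n 0, …, n (k-1))` be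
positive integers with `n 0 ≥ … ≥ n (k-1)` and `p = ∑ n i`. If `n 0 ≤ p/2` (equivalently
`2 * n 0 ≤ p`), then `4 − 2(p − n 0) + Σᵢ n i (p − n i) ≥ p²/2`; equivalently,
`2(4 − 2(p − n 0) + Σᵢ n i (p − n i)) ≥ p²`. -/
theorem kpartite_edge_bound_ge_quarter_square
    (k : ℕ) (hk : 3 ≤ k) (n : Fin k → ℕ) (hpos : ∀ i, 0 < n i) (hmono : Antitone n)
    (hn1 : 2 * n ⟨0, by omega⟩ ≤ ∑ i, n i) :
    (∑ i, (n i : ℤ)) ^ 2 ≤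
      2 * (4 - 2 * ((∑ i, (n i : ℤ)) - (n ⟨0, by omega⟩ : ℤ)) +
        ∑ i, (n i : ℤ) * ((∑ j, (n j : ℤ)) - (n i : ℤ))) := by
  obtain ⟨m, rfl⟩ := Nat.exists_eq_add_of_le' hk
  have hpos' (i : Fin (m + 3)) : (1 : ℤ) ≤ n i := by exact_mod_cast hpos i
  have hmono' {i j : Fin (m + 3)} (hij : i ≤ j) : (n j : ℤ) ≤ n i := by exact_mod_cast hmono hij
  have hn1' : 2 * (n 0 : ℤ) ≤ ∑ i, (n i : ℤ) := by exact_mod_cast hn1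
  rw [Fin.sum_univ_eq_zero_add_one_add] at hn1'
  have hc : (1 : ℤ) ≤ ∑ i : Fin (m + 1), (n i.succ.succ : ℤ) :=
    (hpos' (0 : Fin (m + 1)).succ.succ).trans <|
      single_le_sum (f := fun i : Fin (m + 1) => (n i.succ.succ : ℤ))
        (fun i _ => by positivity) (mem_univ 0)
  have hq := sum_sq_le_of_one_le_of_le univ (fun i : Fin (m + 1) => (n i.succ.succ : ℤ)) (n 1)
    (fun i _ => hpos' _) (fun i _ => hmono' (Fin.le_def.2 (by simp)))
  have hcard : (n 1 : ℤ) ≤ #(univ : Finset (Fin (m + 1))) * n 1 := by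
    simp only [card_univ, Fintype.card_fin]; push_cast; nlinarith [hpos' 1]
  change _ ≤ 2 * (4 - 2 * (_ - (n 0 : ℤ)) + _)
  rw [sum_mul_sum_sub_self, Fin.sum_univ_eq_zero_add_one_add,
    Fin.sum_univ_eq_zero_add_one_add fun i => (n i : ℤ) ^ 2]
  linear_combination sq_add_add_le_two_mul_edge_bound (hpos' 1) (hmono' (Fin.zero_le 1))
    (by linarith) hc (hq.trans (sub_le_sub_left hcard _))
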